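/- arXiv:2009.02979 — 2 statements merged into one kernel-verified Lean document; each statement's English description precedes it below -/
import Mathlib

section
/- The matrix Σ with entries Σ_{(i,j),(i,j)} = 1, Σ_{(i,j),(i,k)} = 1/3 (distinct indices, with standard sign conventions) and Σ_{(i,j),(r,s)} = 0 for all-distinct indices has exactly two eigenvalues: 1/3 with eigenspace the cycle space of K_ℓ (dimension (ℓ-1)(ℓ-2)/2), and 1 + (ℓ-2)/3 with eigenspace the cut space (dimension ℓ-1). -/
open Finset Matrix

/-- Edges of the complete graph `K_ℓ`, oriented from smaller to larger index. -/
abbrev Edge (ℓ : ℕ) := {p : Fin ℓ × Fin ℓ // p.1 < p.2}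

/-- The signed entry `Σ_{(a,b),(c,d)}` of the covariance matrix, with the
conventions `Σ_{(j,i),(r,s)} = -Σ_{(i,j),(r,s)}` and `Σ_{(i,j),(s,r)} = -Σ_{(i,j),(r,s)}`:
it is 1 on equal oriented edges, ±1/3 on edges sharing exactly one vertex,
and 0 on disjoint edges. -/
noncomputable def sigEntry {ℓ : ℕ} (a b c d : Fin ℓ) : ℝ :=
  if a = c ∧ b = d then 1
  else if a = d ∧ b = c then -1
  else if a = c ∨ b = d then 1/3
  else if a = d ∨ b = c then -1/3
  else 0

/-- The covariance matrix `Σ` on the edge space of `K_ℓ`. -/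
noncomputable def SigMat (ℓ : ℕ) : Matrix (Edge ℓ) (Edge ℓ) ℝ :=
  fun e f => sigEntry e.1.1 e.1.2 f.1.1 f.1.2

/-- The boundary (incidence) matrix of `K_ℓ`, sending the edge `(u,v)` to `u - v`. -/
noncomputable def bdry (ℓ : ℕ) : Matrix (Fin ℓ) (Edge ℓ) ℝ :=
  fun u e => if e.1.1 = u then 1 else if e.1.2 = u then -1 else 0

/-- The cycle space of `K_ℓ`: the kernel of the boundary map. -/
noncomputable def cycleSpace (ℓ : ℕ) : Submodule ℝ (Edge ℓ → ℝ) :=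
  LinearMap.ker (Matrix.toLin' (bdry ℓ))

/-- The star vector at vertex `i`: the sum of all outgoing edges `(i,j)`,
with the sign convention `(j,i) = -(i,j)`. -/
noncomputable def starVec (ℓ : ℕ) (i : Fin ℓ) : Edge ℓ → ℝ :=
  fun e => if e.1.1 = i then 1 else if e.1.2 = i then -1 else 0

/-- The cut space of `K_ℓ`: the span of the star vectors. -/
noncomputable def cutSpace (ℓ : ℕ) : Submodule ℝ (Edge ℓ → ℝ) :=
  Submodule.span ℝ (Set.range (starVec ℓ))

/-- The antisymmetric extension of an edge-space vector to all ordered pairs,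
with the convention `x_{(j,i)} = -x_{(i,j)}`. -/
noncomputable def extAS {ℓ : ℕ} (x : Edge ℓ → ℝ) (i j : Fin ℓ) : ℝ :=
  if h : i < j then x ⟨(i, j), h⟩ else if h : j < i then -x ⟨(j, i), h⟩ else 0

/-- The net signed flow out of vertex `i`. -/
noncomputable def flow {ℓ : ℕ} (x : Edge ℓ → ℝ) (i : Fin ℓ) : ℝ := ∑ j, extAS x i j

/-!
Let `B = bdry ℓ` be the signed incidence matrix of `K_ℓ`. Entrywise, `Σ = (1 + BᵀB) / 3`. The
Laplacian `B Bᵀ = ℓ • 1 - J` of `K_ℓ` and the vanishing column sums of `B` give `B Bᵀ B = ℓ • B`,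
so `P = BᵀB` satisfies `P² = ℓ • P`. Hence `P` has no eigenvalues besides `0` and `ℓ`; its
`0`-eigenspace is `ker P = ker B`, the cycle space, and its `ℓ`-eigenspace is
`range P = range Bᵀ`, the span of the star vectors. The kernel of `Bᵀ` consists of the constant
vectors, so `rank B = ℓ - 1`, and rank–nullity on the `choose ℓ 2` edges leaves
`choose (ℓ - 1) 2` for the cycle space.
-/

theorem Fintype.sum_prod_eq_sum_lt_add_swap_add_sum_diag {α M : Type*} [Fintype α]
    [LinearOrder α] [AddCommMonoid M] (φ : α × α → M) :
    ∑ p, φ p = ∑ e : {p : α × α // p.1 < p.2}, (φ e.1 + φ e.1.swap) + ∑ i, φ (i, i) := by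
  let g : {p : α × α // p.1 < p.2} ⊕ {p : α × α // p.1 < p.2} ⊕ α → α × α :=
    Sum.elim (·.1) (Sum.elim (·.1.swap) fun i => (i, i))
  have hg : g.Bijective := by
    constructor
    · rintro (⟨⟨a, b⟩, h⟩ | ⟨⟨a, b⟩, h⟩ | i) (⟨⟨c, d⟩, h'⟩ | ⟨⟨c, d⟩, h'⟩ | j) hg <;>
        simp only [g, Sum.elim_inl, Sum.elim_inr, Prod.swap_prod_mk, Prod.mk.injEq] at hg <;>
        grind
    · rintro ⟨a, b⟩
      rcases lt_trichotomy a b with h | rfl | h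
      · exact ⟨.inl ⟨(a, b), h⟩, rfl⟩
      · exact ⟨.inr (.inr a), rfl⟩
      · exact ⟨.inr (.inl ⟨(b, a), h⟩), rfl⟩
  rw [← Fintype.sum_bijective g hg _ _ fun _ => rfl]
  simp [g, Fintype.sum_sum_type, Finset.sum_add_distrib, add_assoc]

theorem Fintype.sum_sum_sub_mul_sub {ι R : Type*} [Fintype ι] [CommRing R] (a b : ι → R) :
    ∑ i, ∑ j, (a i - a j) * (b i - b j) =
      2 * (Fintype.card ι * ∑ i, a i * b i - (∑ i, a i) * ∑ i, b i) := by
  simp only [sub_mul, mul_sub, Finset.sum_sub_distrib, Finset.sum_const, ← Finset.mul_sum,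
    ← Finset.sum_mul, Finset.card_univ, nsmul_eq_mul]
  ring

namespace Matrix

variable {m n R : Type*} [Fintype m] [Fintype n] [Field R] [LinearOrder R] [IsStrictOrderedRing R]

theorem range_mulVecLin_transpose_mul_self (A : Matrix m n R) :
    LinearMap.range (Aᵀ * A).mulVecLin = LinearMap.range Aᵀ.mulVecLin := by
  refine Submodule.eq_of_le_of_finrank_eq ?_ ?_
  · rw [mulVecLin_mul]
    exact LinearMap.range_comp_le_range _ _
  · change (Aᵀ * A).rank = Aᵀ.rank
    rw [rank_transpose_mul_self, rank_transpose]

end Matrix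

namespace Module.End

variable {K V : Type*} [Field K] [AddCommGroup V] [Module K V]

theorem eigenspace_smul_one_add (f : End K V) {c : K} (hc : c ≠ 0) (t : K) :
    eigenspace (c • (1 + f)) (c * (1 + t)) = eigenspace f t := by
  ext x
  simp only [mem_eigenspace_iff, LinearMap.smul_apply, LinearMap.add_apply, one_apply,
    ← smul_smul, smul_right_inj hc, add_smul, one_smul, add_right_inj]

theorem hasEigenvalue_smul_one_add_iff (f : End K V) {c : K} (hc : c ≠ 0) (μ : K) :
    HasEigenvalue (c • (1 + f)) μ ↔ HasEigenvalue f (μ / c - 1) := by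
  rw [hasEigenvalue_iff, hasEigenvalue_iff, ← eigenspace_smul_one_add f hc, add_sub_cancel,
    mul_div_cancel₀ _ hc]

variable {f : End K V} {c : K}

theorem eq_zero_or_eq_of_mul_self_eq_smul (hf : f * f = c • f) {t : K} (ht : HasEigenvalue f t) :
    t = 0 ∨ t = c := by
  obtain ⟨x, hx⟩ := ht.exists_hasEigenvector
  have hfx := hx.apply_eq_smul
  have hsq : (t * t) • x = (c * t) • x := calc
    (t * t) • x = f (f x) := by rw [hfx, map_smul, hfx, smul_smul]
    _ = (c * t) • x := by rw [← Module.End.mul_apply, hf, LinearMap.smul_apply, hfx, smul_smul]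
  have htc : t * (t - c) = 0 := by
    rw [mul_sub, sub_eq_zero, mul_comm t c]; exact smul_left_injective K hx.2 hsq
  exact (mul_eq_zero.mp htc).imp_right sub_eq_zero.mp

theorem eigenspace_eq_range_of_mul_self_eq_smul (hf : f * f = c • f) (hc : c ≠ 0) :
    eigenspace f c = LinearMap.range f := by
  ext x
  rw [mem_eigenspace_iff]
  constructor
  · intro hx
    exact ⟨c⁻¹ • x, by rw [map_smul, hx, smul_smul, inv_mul_cancel₀ hc, one_smul]⟩
  · rintro ⟨y, rfl⟩
    rw [← Module.End.mul_apply, hf, LinearMap.smul_apply]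

end Module.End

section CompleteGraph

variable {ℓ : ℕ}

theorem bdry_apply (u : Fin ℓ) (e : Edge ℓ) :
    bdry ℓ u e = (if e.1.1 = u then 1 else 0) - if e.1.2 = u then 1 else 0 := by
  obtain ⟨⟨a, b⟩, h⟩ := e
  simp only [bdry]
  split_ifs <;> grind

theorem sum_bdry_apply (e : Edge ℓ) : ∑ u, bdry ℓ u e = 0 := by
  simp [bdry_apply, Finset.sum_sub_distrib]

theorem transpose_bdry_mulVec (y : Fin ℓ → ℝ) (e : Edge ℓ) :
    ((bdry ℓ)ᵀ *ᵥ y) e = y e.1.1 - y e.1.2 := by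
  simp [mulVec, dotProduct, bdry_apply, sub_mul, Finset.sum_sub_distrib, ite_mul]

theorem bdry_mul_transpose :
    bdry ℓ * (bdry ℓ)ᵀ = (ℓ : ℝ) • 1 - Matrix.of fun _ _ => 1 := by
  ext u v
  let φ : Fin ℓ × Fin ℓ → ℝ := fun p =>
    ((if p.1 = u then 1 else 0) - if p.2 = u then 1 else 0) *
      ((if p.1 = v then 1 else 0) - if p.2 = v then 1 else 0)
  have hedge : ∑ e : Edge ℓ, 2 * φ e.1 = ∑ p, φ p := by
    have hswap (p : Fin ℓ × Fin ℓ) : φ p.swap = φ p := by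
      simp only [φ, Prod.fst_swap, Prod.snd_swap]; ring
    have hdiag (i : Fin ℓ) : φ (i, i) = 0 := by simp [φ]
    simp only [Fintype.sum_prod_eq_sum_lt_add_swap_add_sum_diag φ, hswap, hdiag,
      Finset.sum_const_zero, add_zero, two_mul]
  have hfull : ∑ p, φ p = 2 * ((ℓ : ℝ) * (if u = v then 1 else 0) - 1) := by
    rw [Fintype.sum_prod_type]
    refine (Fintype.sum_sum_sub_mul_sub (fun i => if i = u then 1 else 0)
      (fun i => if i = v then 1 else 0)).trans ?_
    simp [eq_comm]
  have hhalf : ∑ e : Edge ℓ, φ e.1 = (ℓ : ℝ) * (if u = v then 1 else 0) - 1 := by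
    rw [← Finset.mul_sum] at hedge; linarith
  simpa [mul_apply, bdry_apply, Matrix.sub_apply, one_apply, of_apply] using hhalf

theorem bdry_mul_transpose_mul_bdry :
    bdry ℓ * (bdry ℓ)ᵀ * bdry ℓ = (ℓ : ℝ) • bdry ℓ := by
  have hcols : (Matrix.of fun _ _ => 1 : Matrix (Fin ℓ) (Fin ℓ) ℝ) * bdry ℓ = 0 := by
    ext u e; simp [Matrix.mul_apply, sum_bdry_apply]
  rw [bdry_mul_transpose, Matrix.sub_mul, hcols, sub_zero, smul_mul, Matrix.one_mul]

theorem sigMat_eq : SigMat ℓ = (3 : ℝ)⁻¹ • (1 + (bdry ℓ)ᵀ * bdry ℓ) := by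
  ext ⟨⟨a, b⟩, hab⟩ ⟨⟨c, d⟩, hcd⟩
  simp only [SigMat, sigEntry, Matrix.smul_apply, Matrix.add_apply, one_apply, Subtype.mk.injEq,
    Prod.mk.injEq, mul_apply, transpose_apply, bdry_apply, mul_sub, mul_ite, mul_one, mul_zero,
    Finset.sum_sub_distrib, Finset.sum_ite_eq, Finset.mem_univ, ↓reduceIte,
    smul_eq_mul] at hab hcd ⊢
  split_ifs <;> grind

theorem toLin'_sigMat :
    toLin' (SigMat ℓ) = (3 : ℝ)⁻¹ • (1 + toLin' ((bdry ℓ)ᵀ * bdry ℓ)) := by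
  rw [sigMat_eq, map_smul, map_add, toLin'_one]; rfl

theorem toLin'_transpose_bdry_mul_bdry_mul_self :
    toLin' ((bdry ℓ)ᵀ * bdry ℓ) * toLin' ((bdry ℓ)ᵀ * bdry ℓ) =
      (ℓ : ℝ) • toLin' ((bdry ℓ)ᵀ * bdry ℓ) := by
  rw [Module.End.mul_eq_comp, ← toLin'_mul, Matrix.mul_assoc, ← Matrix.mul_assoc (bdry ℓ),
    bdry_mul_transpose_mul_bdry, Matrix.mul_smul, map_smul]

theorem cutSpace_eq_range : cutSpace ℓ = LinearMap.range (toLin' (bdry ℓ)ᵀ) :=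
  (Matrix.range_toLin' _).symm

theorem ker_toLin'_transpose_bdry_mul_bdry :
    LinearMap.ker (toLin' ((bdry ℓ)ᵀ * bdry ℓ)) = cycleSpace ℓ :=
  ker_mulVecLin_transpose_mul_self _

theorem range_toLin'_transpose_bdry_mul_bdry :
    LinearMap.range (toLin' ((bdry ℓ)ᵀ * bdry ℓ)) = cutSpace ℓ := by
  rw [cutSpace_eq_range]
  exact range_mulVecLin_transpose_mul_self _

theorem eigenspace_sigMat_eq_cycleSpace :
    Module.End.eigenspace (toLin' (SigMat ℓ)) (1 / 3) = cycleSpace ℓ := by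
  rw [toLin'_sigMat, show (1 / 3 : ℝ) = 3⁻¹ * (1 + 0) by norm_num,
    Module.End.eigenspace_smul_one_add _ (by norm_num), Module.End.eigenspace_zero,
    ker_toLin'_transpose_bdry_mul_bdry]

theorem eigenspace_sigMat_eq_cutSpace [NeZero ℓ] :
    Module.End.eigenspace (toLin' (SigMat ℓ)) (1 + ((ℓ : ℝ) - 2) / 3) = cutSpace ℓ := by
  rw [toLin'_sigMat, show 1 + ((ℓ : ℝ) - 2) / 3 = 3⁻¹ * (1 + ℓ) by ring,
    Module.End.eigenspace_smul_one_add _ (by norm_num),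
    Module.End.eigenspace_eq_range_of_mul_self_eq_smul toLin'_transpose_bdry_mul_bdry_mul_self
      (by simp [NeZero.ne]),
    range_toLin'_transpose_bdry_mul_bdry]

theorem eq_or_eq_of_hasEigenvalue_sigMat {μ : ℝ}
    (hμ : Module.End.HasEigenvalue (toLin' (SigMat ℓ)) μ) :
    μ = 1 / 3 ∨ μ = 1 + ((ℓ : ℝ) - 2) / 3 := by
  rw [toLin'_sigMat, Module.End.hasEigenvalue_smul_one_add_iff _ (by norm_num),
    div_inv_eq_mul] at hμ
  rcases Module.End.eq_zero_or_eq_of_mul_self_eq_smul toLin'_transpose_bdry_mul_bdry_mul_self hμ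
    with h | h
  · left; linarith
  · right; linarith

theorem ker_toLin'_transpose_bdry [NeZero ℓ] :
    LinearMap.ker (toLin' (bdry ℓ)ᵀ) = Submodule.span ℝ {1} := by
  ext y
  rw [LinearMap.mem_ker, toLin'_apply, Submodule.mem_span_singleton]
  constructor
  · intro h
    refine ⟨y 0, funext fun i => ?_⟩
    rcases (Fin.zero_le i).eq_or_lt with rfl | hi
    · simp
    · have h0i := congrFun h ⟨(0, i), hi⟩
      rw [transpose_bdry_mulVec] at h0i
      simp only [Pi.zero_apply, sub_eq_zero] at h0i
      simp [h0i]
  · rintro ⟨a, rfl⟩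
    ext e
    simp [transpose_bdry_mulVec]

theorem rank_transpose_bdry [NeZero ℓ] : (bdry ℓ)ᵀ.rank = ℓ - 1 := by
  have h := LinearMap.finrank_range_add_finrank_ker (toLin' (bdry ℓ)ᵀ)
  rw [ker_toLin'_transpose_bdry, finrank_span_singleton one_ne_zero, Module.finrank_fin_fun,
    toLin'_apply'] at h
  rw [Matrix.rank]
  omega

theorem card_edge : Fintype.card (Edge ℓ) = ℓ.choose 2 := by
  calc Fintype.card (Edge ℓ) = Fintype.card {a : Sym2 (Fin ℓ) // ¬a.IsDiag} := by
        simp only [Fintype.card_subtype, Finset.card_eq_sum_ones]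
        rw [← Finset.sym2_univ, Finset.sum_sym2_filter_not_isDiag]
        congr 1
        ext p
        simpa using fun h : p.1 < p.2 => h.ne
    _ = ℓ.choose 2 := by rw [Sym2.card_subtype_not_diag, Fintype.card_fin]

theorem finrank_cutSpace [NeZero ℓ] : Module.finrank ℝ (cutSpace ℓ) = ℓ - 1 := by
  rw [cutSpace_eq_range, toLin'_apply', ← Matrix.rank, rank_transpose_bdry]

theorem finrank_cycleSpace [NeZero ℓ] :
    Module.finrank ℝ (cycleSpace ℓ) = (ℓ - 1) * (ℓ - 2) / 2 := by
  have h := LinearMap.finrank_range_add_finrank_ker (toLin' (bdry ℓ))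
  rw [toLin'_apply', ← Matrix.rank, ← rank_transpose, rank_transpose_bdry,
    Module.finrank_fintype_fun_eq_card, card_edge] at h
  obtain ⟨k, rfl⟩ : ∃ k, ℓ = k + 1 := Nat.exists_eq_add_one.mpr (Nat.pos_of_neZero ℓ)
  rw [Nat.choose_succ_succ, Nat.choose_one_right, Nat.choose_two_right] at h
  rw [cycleSpace, toLin'_apply', Nat.add_sub_cancel, show k + 1 - 2 = k - 1 by omega]
  omega

end CompleteGraph

/-- `Σ` has exactly two eigenvalues: `1/3`, with eigenspace the cycle space of
`K_ℓ` (of dimension `(ℓ-1)(ℓ-2)/2`), and `1 + (ℓ-2)/3`, with eigenspace the cut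
space (of dimension `ℓ-1`). -/
theorem sig_eigenvalues {ℓ : ℕ} (hℓ : 3 ≤ ℓ) :
    (∀ μ : ℝ, Module.End.HasEigenvalue (Matrix.toLin' (SigMat ℓ)) μ ↔
      μ = 1/3 ∨ μ = 1 + ((ℓ : ℝ) - 2) / 3) ∧
    Module.End.eigenspace (Matrix.toLin' (SigMat ℓ)) (1/3) = cycleSpace ℓ ∧
    Module.End.eigenspace (Matrix.toLin' (SigMat ℓ)) (1 + ((ℓ : ℝ) - 2) / 3) = cutSpace ℓ ∧
    Module.finrank ℝ (cycleSpace ℓ) = (ℓ - 1) * (ℓ - 2) / 2 ∧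
    Module.finrank ℝ (cutSpace ℓ) = ℓ - 1 := by
  have : NeZero ℓ := ⟨by omega⟩
  refine ⟨fun μ => ⟨eq_or_eq_of_hasEigenvalue_sigMat, ?_⟩, eigenspace_sigMat_eq_cycleSpace,
    eigenspace_sigMat_eq_cutSpace, finrank_cycleSpace, finrank_cutSpace⟩
  rintro (rfl | rfl) <;> rw [Module.End.hasEigenvalue_iff, ← Submodule.one_le_finrank_iff]
  · rw [eigenspace_sigMat_eq_cycleSpace, finrank_cycleSpace, show ℓ - 2 = ℓ - 1 - 1 by omega,
      ← Nat.choose_two_right]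
    exact Nat.choose_pos (by omega)
  · rw [eigenspace_sigMat_eq_cutSpace, finrank_cutSpace]
    omega
end

section
/- Let x be an element of the edge space of K_ℓ with orthogonal decomposition x = y + z into cycle part y and cut part z. Then ||z||² = (2/ℓ)(Σ_{(i,j)} x_{(i,j)}² + Σ x_{(i,j)} x_{(i,k)}), where the second sum ranges over pairs of distinct edges sharing a vertex and signs follow the convention x_{(i,j)} = −x_{(j,i)}. -/
open Finset Matrix

/-!
The cycle part `y` has zero flow at every vertex, so `x` and its cut part `z` have the same
flows `f`. Writing `z` as a potential difference `c i - c j` gives `f i = ℓ c i - ∑ c`, hence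
`ℓ z_{(i,j)} = f i - f j`; since `∑ f = 0`, summing squares gives `‖z‖² = (∑ f i²) / ℓ`. On the
other side, expanding `f i² = (∑ j x_{(i,j)})²` splits `∑ f i²` into `2 ∑ x_e²` and the sum over
pairs of distinct edges at a common vertex.
-/

theorem Finset.sum_sum_sub_sq {ι R : Type*} [Fintype ι] [CommRing R] (f : ι → R) :
    ∑ a, ∑ b, (f a - f b) ^ 2 = 2 * Fintype.card ι * ∑ a, f a ^ 2 - 2 * (∑ a, f a) ^ 2 := by
  simp only [sub_sq, Finset.sum_add_distrib, Finset.sum_sub_distrib, ← Finset.mul_sum,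
    ← Finset.sum_mul, Finset.sum_const, Finset.card_univ, nsmul_eq_mul]
  ring

theorem Finset.sum_sum_ite_ne_mul {ι R : Type*} [Fintype ι] [DecidableEq ι] [CommRing R]
    (f : ι → R) : ∑ j, ∑ k, (if j ≠ k then f j * f k else 0) = (∑ j, f j) ^ 2 - ∑ j, f j ^ 2 := by
  have hsplit : ∀ j k,
      f j * f k = (if j ≠ k then f j * f k else 0) + if j = k then f j * f k else 0 :=
    fun j k => by by_cases h : j = k <;> simp [h]
  rw [eq_sub_iff_add_eq, sq, Finset.sum_mul_sum,
    Finset.sum_congr rfl fun j _ => Finset.sum_congr rfl fun k _ => hsplit j k]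
  simp [Finset.sum_add_distrib, sq]

section EdgeSpace

variable {ℓ : ℕ}

theorem sum_edge_eq_sum_sum_ite {M : Type*} [AddCommMonoid M] (G : Fin ℓ → Fin ℓ → M) :
    ∑ e : Edge ℓ, G e.1.1 e.1.2 = ∑ a, ∑ b, if a < b then G a b else 0 := by
  rw [← Fintype.sum_prod_type', ← Finset.sum_filter,
    Finset.sum_subtype (p := fun p : Fin ℓ × Fin ℓ => p.1 < p.2) _ (by simp)]

theorem sum_sum_eq_sum_edge_add_sum_diag {M : Type*} [AddCommMonoid M] (F : Fin ℓ → Fin ℓ → M) :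
    ∑ a, ∑ b, F a b = ∑ e : Edge ℓ, (F e.1.1 e.1.2 + F e.1.2 e.1.1) + ∑ a, F a a := by
  have hsplit : ∀ a b, F a b =
      ((if a < b then F a b else 0) + if b < a then F a b else 0) + if a = b then F a b else 0 := by
    intro a b
    rcases lt_trichotomy a b with h | rfl | h
    · simp [h, h.not_gt, h.ne]
    · simp
    · simp [h, h.not_gt, h.ne']
  rw [Finset.sum_add_distrib, sum_edge_eq_sum_sum_ite, sum_edge_eq_sum_sum_ite (fun a b => F b a),
    Finset.sum_comm (f := fun a b => if a < b then F b a else 0),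
    Finset.sum_congr rfl fun a _ => Finset.sum_congr rfl fun b _ => hsplit a b]
  simp only [Finset.sum_add_distrib, Finset.sum_ite_eq, Finset.mem_univ, if_true]

theorem extAS_swap (x : Edge ℓ → ℝ) (i j : Fin ℓ) : extAS x j i = -extAS x i j := by
  unfold extAS
  rcases lt_trichotomy i j with h | rfl | h
  · simp [h, h.not_gt]
  · simp
  · simp [h, h.not_gt]

@[simp]
theorem extAS_self (x : Edge ℓ → ℝ) (i : Fin ℓ) : extAS x i i = 0 := by
  simp [extAS]

@[simp]
theorem extAS_edge (x : Edge ℓ → ℝ) (e : Edge ℓ) : extAS x e.1.1 e.1.2 = x e :=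
  dif_pos e.2

@[simp]
theorem extAS_edge_swap (x : Edge ℓ → ℝ) (e : Edge ℓ) : extAS x e.1.2 e.1.1 = -x e := by
  rw [extAS_swap, extAS_edge]

theorem extAS_add (x y : Edge ℓ → ℝ) (i j : Fin ℓ) :
    extAS (x + y) i j = extAS x i j + extAS y i j := by
  unfold extAS
  split_ifs <;> simp only [Pi.add_apply, neg_add, add_zero]

theorem extAS_eq_sub_of_forall_edge {z : Edge ℓ → ℝ} {c : Fin ℓ → ℝ}
    (hz : ∀ e : Edge ℓ, z e = c e.1.1 - c e.1.2) (i j : Fin ℓ) : extAS z i j = c i - c j := by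
  unfold extAS
  split_ifs with h h'
  · exact hz _
  · rw [hz]; simp only [neg_sub]
  · simp [le_antisymm (not_lt.1 h') (not_lt.1 h)]

theorem sum_sum_extAS_sq (x : Edge ℓ → ℝ) :
    ∑ i, ∑ j, extAS x i j ^ 2 = 2 * ∑ e : Edge ℓ, x e ^ 2 := by
  simp [sum_sum_eq_sum_edge_add_sum_diag (fun i j => extAS x i j ^ 2), ← two_mul, Finset.mul_sum]

theorem sum_flow_eq_zero (x : Edge ℓ → ℝ) : ∑ i, flow x i = 0 := by
  simp [flow, sum_sum_eq_sum_edge_add_sum_diag (extAS x)]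

theorem starVec_apply (k : Fin ℓ) (e : Edge ℓ) :
    starVec ℓ k e = (if e.1.1 = k then 1 else 0) - if e.1.2 = k then 1 else 0 := by
  have hne := e.2.ne
  unfold starVec
  split_ifs <;> simp_all

theorem flow_eq_sum_starVec_mul (x : Edge ℓ → ℝ) (i : Fin ℓ) :
    flow x i = ∑ e : Edge ℓ, starVec ℓ i e * x e := by
  have := sum_sum_eq_sum_edge_add_sum_diag fun a b => if a = i then extAS x a b else 0
  simp only [Finset.sum_ite_irrel, Finset.sum_const_zero, Finset.sum_ite_eq', Finset.mem_univ,
    if_true, extAS_edge, extAS_edge_swap, extAS_self, ite_self, add_zero] at this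
  rw [flow, this]
  refine Finset.sum_congr rfl fun e _ => ?_
  rw [starVec_apply]
  split_ifs <;> ring

theorem flow_add (x y : Edge ℓ → ℝ) : flow (x + y) = flow x + flow y := by
  ext i
  simp [flow, extAS_add, Finset.sum_add_distrib]

theorem flow_eq_zero_of_mem_cycleSpace {y : Edge ℓ → ℝ} (hy : y ∈ cycleSpace ℓ) : flow y = 0 := by
  ext i
  rw [flow_eq_sum_starVec_mul]
  -- `bdry ℓ i` and `starVec ℓ i` have the same entries
  exact congrFun (LinearMap.mem_ker.1 hy) i

theorem exists_potential_of_mem_cutSpace {z : Edge ℓ → ℝ} (hz : z ∈ cutSpace ℓ) :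
    ∃ c : Fin ℓ → ℝ, ∀ i j, extAS z i j = c i - c j := by
  obtain ⟨c, rfl⟩ := (Submodule.mem_span_range_iff_exists_fun ℝ).1 hz
  refine ⟨c, extAS_eq_sub_of_forall_edge fun e => ?_⟩
  simp [starVec_apply, mul_sub, Finset.sum_sub_distrib]

theorem natCast_mul_extAS_eq_flow_sub_flow {z : Edge ℓ → ℝ} (hz : z ∈ cutSpace ℓ) (i j : Fin ℓ) :
    ℓ * extAS z i j = flow z i - flow z j := by
  obtain ⟨c, hc⟩ := exists_potential_of_mem_cutSpace hz
  simp only [flow, hc, Finset.sum_sub_distrib, Finset.sum_const, Finset.card_univ, Fintype.card_fin,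
    nsmul_eq_mul]
  ring

theorem sum_sq_eq_sum_flow_sq_div {z : Edge ℓ → ℝ} (hz : z ∈ cutSpace ℓ) :
    ∑ e : Edge ℓ, z e ^ 2 = (∑ i, flow z i ^ 2) / ℓ := by
  rcases eq_or_ne ℓ 0 with rfl | hℓ
  · simp
  have hℓ' : (ℓ : ℝ) ≠ 0 := Nat.cast_ne_zero.2 hℓ
  have hpot := Finset.sum_sum_sub_sq (flow z)
  simp only [sum_flow_eq_zero, Fintype.card_fin, ← natCast_mul_extAS_eq_flow_sub_flow hz, mul_pow,
    ← Finset.mul_sum, sum_sum_extAS_sq] at hpot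
  rw [eq_div_iff hℓ']
  apply mul_left_cancel₀ (mul_ne_zero two_ne_zero hℓ')
  linear_combination hpot

end EdgeSpace

theorem cut_part_norm_sq_general {ℓ : ℕ} (x y z : Edge ℓ → ℝ)
    (hx : x = y + z) (hy : y ∈ cycleSpace ℓ) (hz : z ∈ cutSpace ℓ) :
    ∑ e : Edge ℓ, z e ^ 2
      = (2 / (ℓ : ℝ)) * ((∑ e : Edge ℓ, x e ^ 2) +
          (1 / 2) * ∑ i : Fin ℓ, ∑ j : Fin ℓ, ∑ k : Fin ℓ,
            (if j ≠ k then extAS x i j * extAS x i k else 0)) := by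
  have hflow : flow x = flow z := by
    rw [hx, flow_add, flow_eq_zero_of_mem_cycleSpace hy, zero_add]
  have hcross : ∑ i : Fin ℓ, ∑ j : Fin ℓ, ∑ k : Fin ℓ,
      (if j ≠ k then extAS x i j * extAS x i k else 0)
        = ∑ i, flow x i ^ 2 - 2 * ∑ e : Edge ℓ, x e ^ 2 := by
    simp only [Finset.sum_sum_ite_ne_mul, Finset.sum_sub_distrib, sum_sum_extAS_sq, flow]
  rw [hcross, sum_sq_eq_sum_flow_sq_div hz, hflow]
  ring

/-- If `x = y + z` with `y` in the cycle space and `z` in the cut space of `K_ℓ`,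
then `‖z‖² = (2/ℓ)(Σ_{(i,j)} x_{(i,j)}² + Σ x_{(i,j)} x_{(i,k)})`, where the
second sum ranges over pairs of distinct edges sharing a vertex, with signs
given by the convention `x_{(i,j)} = −x_{(j,i)}`. -/
theorem cut_part_norm_sq {ℓ : ℕ} (hℓ : 2 ≤ ℓ) (x y z : Edge ℓ → ℝ)
    (hx : x = y + z) (hy : y ∈ cycleSpace ℓ) (hz : z ∈ cutSpace ℓ) :
    ∑ e : Edge ℓ, z e ^ 2
      = (2 / (ℓ : ℝ)) * ((∑ e : Edge ℓ, x e ^ 2) +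
          (1 / 2) * ∑ i : Fin ℓ, ∑ j : Fin ℓ, ∑ k : Fin ℓ,
            (if j ≠ k then extAS x i j * extAS x i k else 0)) :=
  cut_part_norm_sq_general x y z hx hy hz
end
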